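/- arXiv:1510.06516 — 8 statements merged into one kernel-verified Lean document; each statement's English description precedes it below -/
import Mathlib

section
/- Assume F¹ > 0, v₀ > 0, f_p(v₀) < f₀(v₀) and Δd > 0, and let ṽ = v₀(1 + √(1 − F_p¹/F¹ + ΔF⁰/(F¹v₀))). Then ṽ > v₀ and f_r attains its global minimum over the open interval (v₀, ∞) at ṽ, i.e., f_r(ṽ) ≤ f_r(v) for every v > v₀. -/
/-!
With `t = v − v₀` and `c = f₀(v₀) − f_p(v₀) > 0`, one has
`f_r(v) / Δd = F¹ (t + τ²/t) + const` where `F¹τ² = c v₀`, and `t + τ²/t ≥ 2τ` with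
equality at `t = τ`. Since the radicand in `ṽ` equals `c / (F¹v₀)`, `τ = ṽ − v₀`.
-/

/-- The rendezvous-speed-dependent part of the coordination follower's fuel
cost: `f_r(v) = (F¹v − F_p¹v₀ + ΔF⁰) · (v/(v − v₀)) · Δd`. -/
noncomputable def fr (F1 Fp1 ΔF0 v0 Δd v : ℝ) : ℝ :=
  (F1 * v - Fp1 * v0 + ΔF0) * (v / (v - v0)) * Δd

lemma two_mul_le_add_sq_div {t τ : ℝ} (ht : 0 < t) : 2 * τ ≤ t + τ ^ 2 / t := by
  have hsq : t + τ ^ 2 / t - 2 * τ = (t - τ) ^ 2 / t := by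
    field_simp
    ring
  rw [← sub_nonneg, hsq]
  positivity

lemma fr_eq_add_sq_div {F1 Fp1 ΔF0 v0 Δd v τ : ℝ} (hv : v ≠ v0)
    (hτ : F1 * τ ^ 2 = (F1 * v0 - Fp1 * v0 + ΔF0) * v0) :
    fr F1 Fp1 ΔF0 v0 Δd v =
      (F1 * ((v - v0) + τ ^ 2 / (v - v0)) + (2 * F1 * v0 - Fp1 * v0 + ΔF0)) * Δd := by
  have ht : v - v0 ≠ 0 := sub_ne_zero.mpr hv
  unfold fr
  field_simp
  linear_combination (-Δd) * hτ

lemma fr_le_of_sq_eq {F1 Fp1 ΔF0 v0 Δd v τ : ℝ} (hF1 : 0 ≤ F1) (hΔd : 0 ≤ Δd)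
    (hτ_pos : 0 < τ) (hτ : F1 * τ ^ 2 = (F1 * v0 - Fp1 * v0 + ΔF0) * v0) (hv : v0 < v) :
    fr F1 Fp1 ΔF0 v0 Δd (v0 + τ) ≤ fr F1 Fp1 ΔF0 v0 Δd v := by
  rw [fr_eq_add_sq_div (by linarith) hτ, fr_eq_add_sq_div hv.ne' hτ, add_sub_cancel_left,
    sq, mul_div_cancel_right₀ _ hτ_pos.ne', ← two_mul, ← sq]
  gcongr
  exact two_mul_le_add_sq_div (sub_pos.mpr hv)

/-- Assume `F¹ > 0`, `v₀ > 0`, `f_p(v₀) < f₀(v₀)` and `Δd > 0`,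
and let `ṽ = v₀(1 + √(1 − F_p¹/F¹ + ΔF⁰/(F¹v₀)))`. Then `ṽ > v₀` and `f_r`
attains its global minimum over `(v₀, ∞)` at `ṽ`. -/
theorem fr_global_min_speedup (F1 F0 Fp1 Fp0 v0 Δd : ℝ)
    (hF1 : 0 < F1) (hv0 : 0 < v0)
    (hfuel : Fp1 * v0 + Fp0 < F1 * v0 + F0) (hΔd : 0 < Δd) :
    v0 < v0 * (1 + Real.sqrt (1 - Fp1 / F1 + (F0 - Fp0) / (F1 * v0))) ∧
    ∀ v : ℝ, v0 < v →
      fr F1 Fp1 (F0 - Fp0) v0 Δd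
          (v0 * (1 + Real.sqrt (1 - Fp1 / F1 + (F0 - Fp0) / (F1 * v0)))) ≤
        fr F1 Fp1 (F0 - Fp0) v0 Δd v := by
  set E := 1 - Fp1 / F1 + (F0 - Fp0) / (F1 * v0)
  have hF1v0 : 0 < F1 * v0 := mul_pos hF1 hv0
  have hE_mul : F1 * v0 * E = F1 * v0 - Fp1 * v0 + (F0 - Fp0) := by
    simp only [E]
    field_simp
  have hE_pos : 0 < E := pos_of_mul_pos_right (by linarith) hF1v0.le
  have hτ_pos : 0 < v0 * √E := mul_pos hv0 (Real.sqrt_pos.mpr hE_pos)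
  have hτ : F1 * (v0 * √E) ^ 2 = (F1 * v0 - Fp1 * v0 + (F0 - Fp0)) * v0 := by
    rw [mul_pow, Real.sq_sqrt hE_pos.le, ← hE_mul]
    ring
  have hspeed : v0 * (1 + √E) = v0 + v0 * √E := by ring
  rw [hspeed]
  exact ⟨lt_add_of_pos_right v0 hτ_pos,
    fun v hv => fr_le_of_sq_eq hF1.le hΔd.le hτ_pos hτ hv⟩
end

section
/- Assume F¹ > 0, v₀ > 0, f_p(v₀) < f₀(v₀) and Δd < 0, and let ṽ = v₀(1 − √(1 − F_p¹/F¹ + ΔF⁰/(F¹v₀))). Then ṽ < v₀ and f_r attains its global minimum over the open interval (−∞, v₀) at ṽ, i.e., f_r(ṽ) ≤ f_r(v) for every v < v₀. -/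
/-- Assume `F¹ > 0`, `v₀ > 0`, `f_p(v₀) < f₀(v₀)` and `Δd < 0`,
and let `ṽ = v₀(1 − √(1 − F_p¹/F¹ + ΔF⁰/(F¹v₀)))`. Then `ṽ < v₀` and `f_r`
attains its global minimum over `(−∞, v₀)` at `ṽ`. -/
theorem fr_global_min_slowdown (F1 F0 Fp1 Fp0 v0 Δd : ℝ)
    (hF1 : 0 < F1) (hv0 : 0 < v0)
    (hfuel : Fp1 * v0 + Fp0 < F1 * v0 + F0) (hΔd : Δd < 0) :
    v0 * (1 - Real.sqrt (1 - Fp1 / F1 + (F0 - Fp0) / (F1 * v0))) < v0 ∧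
    ∀ v : ℝ, v < v0 →
      fr F1 Fp1 (F0 - Fp0) v0 Δd
          (v0 * (1 - Real.sqrt (1 - Fp1 / F1 + (F0 - Fp0) / (F1 * v0)))) ≤
        fr F1 Fp1 (F0 - Fp0) v0 Δd v := by
  set A : ℝ := (F1 - Fp1) * v0 + (F0 - Fp0) with hAdef
  have hA : 0 < A := by nlinarith
  have hFv : 0 < F1 * v0 := mul_pos hF1 hv0
  have hs_eq : 1 - Fp1 / F1 + (F0 - Fp0) / (F1 * v0) = A / (F1 * v0) := by
    field_simp
    ring
  have hs : 0 < A / (F1 * v0) := div_pos hA hFv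
  rw [hs_eq]
  set r : ℝ := Real.sqrt (A / (F1 * v0)) with hrdef
  have hrpos : 0 < r := Real.sqrt_pos.mpr hs
  have hr2 : r ^ 2 = A / (F1 * v0) := Real.sq_sqrt hs.le
  set wt : ℝ := v0 * r with hwtdef
  have hwt : 0 < wt := mul_pos hv0 hrpos
  have hkey : F1 * wt ^ 2 = A * v0 := by
    have h1 : wt ^ 2 = v0 ^ 2 * (A / (F1 * v0)) := by rw [hwtdef, mul_pow, hr2]
    rw [h1]
    field_simp
  have heq : ∀ u : ℝ, 0 < u →
      fr F1 Fp1 (F0 - Fp0) v0 Δd (v0 - u)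
        = Δd * (A + F1 * v0 - (A * v0 / u + F1 * u)) := by
    intro u hu
    unfold fr
    rw [hAdef]
    have h2 : v0 - u - v0 = -u := by ring
    rw [h2]
    field_simp [hu.ne']
    ring
  constructor
  · nlinarith
  · intro v hv
    have hw : 0 < v0 - v := by linarith
    have hv' : v = v0 - (v0 - v) := by ring
    have hvt : v0 * (1 - r) = v0 - wt := by rw [hwtdef]; ring
    rw [hvt, heq wt hwt, hv', heq (v0 - v) hw]
    set w : ℝ := v0 - v
    have hmain : A * v0 / wt + F1 * wt ≤ A * v0 / w + F1 * w := by
      have hL : A * v0 / wt + F1 * wt = 2 * F1 * wt := by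
        rw [← hkey]
        field_simp
        ring
      rw [hL, ← hkey, div_add' _ _ _ hw.ne', le_div_iff₀ hw]
      nlinarith [sq_nonneg (w - wt)]
    have : A + F1 * v0 - (A * v0 / w + F1 * w)
        ≤ A + F1 * v0 - (A * v0 / wt + F1 * wt) := by linarith
    exact mul_le_mul_of_nonpos_left this hΔd.le
end

section
/- Assume F¹ > 0, v₀ > 0, f_p(v₀) < f₀(v₀) and Δd > 0, and let ṽ = v₀(1 + √(1 − F_p¹/F¹ + ΔF⁰/(F¹v₀))). Then f_r is strictly decreasing on the interval (v₀, ṽ] and strictly increasing on the interval [ṽ, ∞). -/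
set_option maxHeartbeats 1000000


lemma fr_diff (F1 Fp1 ΔF0 v0 Δd a b : ℝ) (ha : a ≠ v0) (hb : b ≠ v0) :
    fr F1 Fp1 ΔF0 v0 Δd b - fr F1 Fp1 ΔF0 v0 Δd a =
      Δd * (b - a) * (F1 * (a - v0) * (b - v0) - v0 * (F1 * v0 + ΔF0 - Fp1 * v0))
        / ((a - v0) * (b - v0)) := by
  have ha' : a - v0 ≠ 0 := sub_ne_zero.mpr ha
  have hb' : b - v0 ≠ 0 := sub_ne_zero.mpr hb
  unfold fr
  field_simp
  ring

/-- Assume `F¹ > 0`, `v₀ > 0`, `f_p(v₀) < f₀(v₀)` and `Δd > 0`,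
and let `ṽ = v₀(1 + √(1 − F_p¹/F¹ + ΔF⁰/(F¹v₀)))`. Then `f_r` is strictly
decreasing on `(v₀, ṽ]` and strictly increasing on `[ṽ, ∞)`. -/
theorem fr_monotonicity_speedup (F1 F0 Fp1 Fp0 v0 Δd : ℝ)
    (hF1 : 0 < F1) (hv0 : 0 < v0)
    (hfuel : Fp1 * v0 + Fp0 < F1 * v0 + F0) (hΔd : 0 < Δd) :
    StrictAntiOn (fr F1 Fp1 (F0 - Fp0) v0 Δd)
      (Set.Ioc v0 (v0 * (1 + Real.sqrt (1 - Fp1 / F1 + (F0 - Fp0) / (F1 * v0))))) ∧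
    StrictMonoOn (fr F1 Fp1 (F0 - Fp0) v0 Δd)
      (Set.Ici (v0 * (1 + Real.sqrt (1 - Fp1 / F1 + (F0 - Fp0) / (F1 * v0))))) := by
  set t : ℝ := 1 - Fp1 / F1 + (F0 - Fp0) / (F1 * v0) with ht
  set A : ℝ := v0 * (F1 * v0 + (F0 - Fp0) - Fp1 * v0) with hA
  have hApos : 0 < A := by
    have : 0 < F1 * v0 + (F0 - Fp0) - Fp1 * v0 := by linarith
    positivity
  have htA : F1 * v0 * v0 * t = A := by
    rw [ht, hA]
    field_simp
    ring
  have ht0 : 0 < t := by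
    have h1 : 0 < F1 * v0 * v0 := by positivity
    nlinarith
  set s0 : ℝ := v0 * Real.sqrt t with hs0
  have hs0pos : 0 < s0 := by
    have := Real.sqrt_pos.mpr ht0
    positivity
  have hs0sq : F1 * (s0 * s0) = A := by
    rw [hs0]
    have : Real.sqrt t * Real.sqrt t = t := Real.mul_self_sqrt ht0.le
    nlinarith [this]
  have hvt : v0 * (1 + Real.sqrt t) = v0 + s0 := by rw [hs0]; ring
  rw [hvt]
  constructor
  · intro a ha b hb hab
    obtain ⟨ha1, ha2⟩ := ha
    obtain ⟨hb1, hb2⟩ := hb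
    have hx : 0 < a - v0 := by linarith
    have hy : 0 < b - v0 := by linarith
    have hkey : F1 * (a - v0) * (b - v0) - A < 0 := by
      have : (a - v0) * (b - v0) < s0 * s0 := by nlinarith
      nlinarith
    have hd := fr_diff F1 Fp1 (F0 - Fp0) v0 Δd a b (by linarith) (by linarith)
    have hnum : Δd * (b - a) * (F1 * (a - v0) * (b - v0) - A) < 0 := by
      have h1 : 0 < Δd * (b - a) := by nlinarith
      nlinarith
    have : fr F1 Fp1 (F0 - Fp0) v0 Δd b - fr F1 Fp1 (F0 - Fp0) v0 Δd a < 0 := by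
      rw [hd]
      exact div_neg_of_neg_of_pos hnum (by positivity)
    linarith
  · intro a ha b hb hab
    simp only [Set.mem_Ici] at ha hb
    have hx : 0 < a - v0 := by linarith
    have hy : 0 < b - v0 := by linarith
    have hkey : 0 < F1 * (a - v0) * (b - v0) - A := by
      have : s0 * s0 < (a - v0) * (b - v0) := by nlinarith
      nlinarith
    have hd := fr_diff F1 Fp1 (F0 - Fp0) v0 Δd a b (by linarith) (by linarith)
    have hnum : 0 < Δd * (b - a) * (F1 * (a - v0) * (b - v0) - A) := by
      have h1 : 0 < Δd * (b - a) := by nlinarith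
      nlinarith
    have : 0 < fr F1 Fp1 (F0 - Fp0) v0 Δd b - fr F1 Fp1 (F0 - Fp0) v0 Δd a := by
      rw [hd]
      exact div_pos hnum (by positivity)
    linarith
end

section
/- (Proposition 1, speed-up case.) Assume F¹ > 0, v₀ > 0, f_p(v₀) < f₀(v₀), Δd > 0 and v_max > v₀. Let ṽ = v₀(1 + √(1 − F_p¹/F¹ + ΔF⁰/(F¹v₀))) and define v* = min(ṽ, v_max). Then v* ∈ (v₀, v_max] and f_r(v*) ≤ f_r(v) for every v ∈ (v₀, v_max]; i.e., the rendezvous speed v* minimizes the coordination follower's fuel consumption among all admissible rendezvous speeds exceeding the leader's speed and bounded by v_max. -/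
private lemma fr_compare (F1 Fp1 ΔF0 v0 Δd v w : ℝ)
    (hΔd : 0 ≤ Δd) (hv : v0 < v) (hw : v0 < w)
    (h : 0 ≤ (v - w) * (F1 * (v - v0) * (w - v0) - (F1 * v0 - Fp1 * v0 + ΔF0) * v0)) :
    fr F1 Fp1 ΔF0 v0 Δd w ≤ fr F1 Fp1 ΔF0 v0 Δd v := by
  unfold fr
  have hv' : 0 < v - v0 := by linarith
  have hw' : 0 < w - v0 := by linarith
  have e : ∀ x : ℝ, (F1 * x - Fp1 * v0 + ΔF0) * (x / (x - v0)) * Δd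
      = ((F1 * x - Fp1 * v0 + ΔF0) * x * Δd) / (x - v0) := fun x => by ring
  rw [e, e, div_le_div_iff₀ hw' hv']
  nlinarith [mul_nonneg hΔd h]

/-- Proposition 1, speed-up case: Assume `F¹ > 0`, `v₀ > 0`,
`f_p(v₀) < f₀(v₀)`, `Δd > 0` and `v_max > v₀`. With
`ṽ = v₀(1 + √(1 − F_p¹/F¹ + ΔF⁰/(F¹v₀)))` and `v* = min(ṽ, v_max)`, we have
`v* ∈ (v₀, v_max]` and `f_r(v*) ≤ f_r(v)` for every `v ∈ (v₀, v_max]`. -/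
theorem optimal_rendezvous_speed_speedup (F1 F0 Fp1 Fp0 v0 Δd vmax : ℝ)
    (hF1 : 0 < F1) (hv0 : 0 < v0)
    (hfuel : Fp1 * v0 + Fp0 < F1 * v0 + F0) (hΔd : 0 < Δd) (hvmax : v0 < vmax) :
    min (v0 * (1 + Real.sqrt (1 - Fp1 / F1 + (F0 - Fp0) / (F1 * v0)))) vmax ∈
        Set.Ioc v0 vmax ∧
    ∀ v ∈ Set.Ioc v0 vmax,
      fr F1 Fp1 (F0 - Fp0) v0 Δd
          (min (v0 * (1 + Real.sqrt (1 - Fp1 / F1 + (F0 - Fp0) / (F1 * v0)))) vmax) ≤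
        fr F1 Fp1 (F0 - Fp0) v0 Δd v := by
  have hc : 0 < F1 * v0 - Fp1 * v0 + (F0 - Fp0) := by linarith
  set s : ℝ := 1 - Fp1 / F1 + (F0 - Fp0) / (F1 * v0) with hs_def
  have h3 : F1 * v0 * s = F1 * v0 - Fp1 * v0 + (F0 - Fp0) := by
    rw [hs_def]
    field_simp
  have hs_pos : 0 < s := by
    have hden : 0 < F1 * v0 := by positivity
    nlinarith
  set w : ℝ := v0 * (1 + Real.sqrt s) with hw_def
  have hsqrt : 0 < Real.sqrt s := Real.sqrt_pos.mpr hs_pos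
  have hw : v0 < w := by
    have : w = v0 + v0 * Real.sqrt s := by rw [hw_def]; ring
    nlinarith
  have h2 : Real.sqrt s * Real.sqrt s = s := Real.mul_self_sqrt hs_pos.le
  have hkey : F1 * (w - v0) * (w - v0) = (F1 * v0 - Fp1 * v0 + (F0 - Fp0)) * v0 := by
    have h1 : w - v0 = v0 * Real.sqrt s := by rw [hw_def]; ring
    rw [h1]
    linear_combination (F1 * v0 ^ 2) * h2 + v0 * h3
  refine ⟨⟨lt_min hw hvmax, min_le_right _ _⟩, ?_⟩
  rintro v ⟨hv1, hv2⟩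
  rcases le_total w vmax with h | h
  · rw [min_eq_left h]
    apply fr_compare _ _ _ _ _ _ _ hΔd.le hv1 hw
    have heq : (v - w) * (F1 * (v - v0) * (w - v0) - (F1 * v0 - Fp1 * v0 + (F0 - Fp0)) * v0)
        = F1 * (w - v0) * (v - w) ^ 2 := by linear_combination (v - w) * hkey
    rw [heq]
    have hw' : 0 ≤ w - v0 := by linarith
    exact mul_nonneg (mul_nonneg hF1.le hw') (sq_nonneg _)
  · rw [min_eq_right h]
    apply fr_compare _ _ _ _ _ _ _ hΔd.le hv1 hvmax
    have h1 : v - vmax ≤ 0 := by linarith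
    have hb : F1 * (v - v0) * (vmax - v0) - (F1 * v0 - Fp1 * v0 + (F0 - Fp0)) * v0 ≤ 0 := by
      nlinarith [mul_nonneg (mul_nonneg hF1.le (by linarith : (0:ℝ) ≤ w - vmax))
          (by linarith : (0:ℝ) ≤ vmax - v0),
        mul_nonneg (mul_nonneg hF1.le (by linarith : (0:ℝ) ≤ w - v0))
          (by linarith : (0:ℝ) ≤ w - vmax),
        mul_nonneg (mul_nonneg hF1.le (by linarith : (0:ℝ) ≤ vmax - v))
          (by linarith : (0:ℝ) ≤ vmax - v0)]
    nlinarith [mul_nonneg (neg_nonneg.mpr h1) (neg_nonneg.mpr hb)]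
end

section
/- (Proposition 1, slow-down case.) Assume F¹ > 0, v₀ > 0, f_p(v₀) < f₀(v₀), Δd < 0 and 0 < v_min < v₀. Let ṽ = v₀(1 − √(1 − F_p¹/F¹ + ΔF⁰/(F¹v₀))) and define v* = max(ṽ, v_min). Then v* ∈ [v_min, v₀) and f_r(v*) ≤ f_r(v) for every v ∈ [v_min, v₀); i.e., the rendezvous speed v* minimizes the coordination follower's fuel consumption among all admissible rendezvous speeds below the leader's speed and bounded below by v_min. -/
/-- Proposition 1, slow-down case: Assume `F¹ > 0`, `v₀ > 0`,
`f_p(v₀) < f₀(v₀)`, `Δd < 0` and `0 < v_min < v₀`. With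
`ṽ = v₀(1 − √(1 − F_p¹/F¹ + ΔF⁰/(F¹v₀)))` and `v* = max(ṽ, v_min)`, we have
`v* ∈ [v_min, v₀)` and `f_r(v*) ≤ f_r(v)` for every `v ∈ [v_min, v₀)`. -/
theorem optimal_rendezvous_speed_slowdown (F1 F0 Fp1 Fp0 v0 Δd vmin : ℝ)
    (hF1 : 0 < F1) (hv0 : 0 < v0)
    (hfuel : Fp1 * v0 + Fp0 < F1 * v0 + F0) (hΔd : Δd < 0)
    (hvmin0 : 0 < vmin) (hvmin : vmin < v0) :
    max (v0 * (1 - Real.sqrt (1 - Fp1 / F1 + (F0 - Fp0) / (F1 * v0)))) vmin ∈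
        Set.Ico vmin v0 ∧
    ∀ v ∈ Set.Ico vmin v0,
      fr F1 Fp1 (F0 - Fp0) v0 Δd
          (max (v0 * (1 - Real.sqrt (1 - Fp1 / F1 + (F0 - Fp0) / (F1 * v0)))) vmin) ≤
        fr F1 Fp1 (F0 - Fp0) v0 Δd v := by
  set A : ℝ := 1 - Fp1 / F1 + (F0 - Fp0) / (F1 * v0) with hAdef
  have hF1' : F1 ≠ 0 := ne_of_gt hF1
  have hv0' : v0 ≠ 0 := ne_of_gt hv0
  have hB : 0 < F1 * v0 - Fp1 * v0 + (F0 - Fp0) := by linarith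
  have hA : 0 < A := by
    rw [hAdef]
    have : A = (F1 * v0 - Fp1 * v0 + (F0 - Fp0)) / (F1 * v0) := by
      rw [hAdef]; field_simp
    rw [← hAdef, this]
    positivity
  set s : ℝ := Real.sqrt A with hsdef
  have hs : 0 < s := Real.sqrt_pos.2 hA
  have hs2 : s ^ 2 = A := Real.sq_sqrt hA.le
  set w : ℝ := max (v0 * (1 - s)) vmin with hwdef
  clear_value A
  have hwlt : w < v0 := by
    apply max_lt _ hvmin
    nlinarith
  have hwge : vmin ≤ w := le_max_right _ _
  have hwpos : 0 < w := lt_of_lt_of_le hvmin0 hwge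
  refine ⟨⟨hwge, hwlt⟩, ?_⟩
  rintro v ⟨hv1, hv2⟩
  have hvpos : 0 < v := lt_of_lt_of_le hvmin0 hv1
  have hdw : w - v0 < 0 := by linarith
  have hdv : v - v0 < 0 := by linarith
  have hden : 0 < (w - v0) * (v - v0) := mul_pos_of_neg_of_neg hdw hdv
  -- key polynomial inequality
  have hAB : F1 * v0 ^ 2 * s ^ 2 = (F1 * v0 - Fp1 * v0 + (F0 - Fp0)) * v0 := by
    rw [hs2, hAdef]; field_simp
  have key : 0 ≤ (w - v) * (F1 * (w - v0) * (v - v0)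
      - (F1 * v0 - Fp1 * v0 + (F0 - Fp0)) * v0) := by
    rw [← hAB]
    rcases le_or_gt vmin (v0 * (1 - s)) with h | h
    · have hw : w = v0 * (1 - s) := max_eq_left h
      rw [hw]
      have : (v0 * (1 - s) - v) * (F1 * (v0 * (1 - s) - v0) * (v - v0)
          - F1 * v0 ^ 2 * s ^ 2) = F1 * v0 * s * (v0 * (1 - s) - v) ^ 2 := by
        ring
      rw [this]
      positivity
    · have hw : w = vmin := max_eq_right h.le
      have hvgt : v0 * (1 - s) < v := lt_of_lt_of_le h hv1
      have h1 : 0 < v0 - w := by rw [hw]; linarith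
      have h2 : 0 < v0 - v := by linarith
      have h3 : v0 - w < v0 * s := by rw [hw]; nlinarith
      have h4 : v0 - v < v0 * s := by nlinarith
      have h5 : w - v ≤ 0 := by rw [hw]; linarith
      have h6 : (v0 - w) * (v0 - v) < (v0 * s) * (v0 * s) :=
        mul_lt_mul'' h3 h4 h1.le h2.le
      have h7 : F1 * (w - v0) * (v - v0) - F1 * v0 ^ 2 * s ^ 2 ≤ 0 := by nlinarith
      rw [← neg_mul_neg]
      exact mul_nonneg (neg_nonneg.2 h5) (neg_nonneg.2 h7)
  clear_value s w
  have hfr : fr F1 Fp1 (F0 - Fp0) v0 Δd w - fr F1 Fp1 (F0 - Fp0) v0 Δd v =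
      Δd * ((w - v) * (F1 * (w - v0) * (v - v0)
        - (F1 * v0 - Fp1 * v0 + (F0 - Fp0)) * v0)) / ((w - v0) * (v - v0)) := by
    have h1 : w - v0 ≠ 0 := ne_of_lt hdw
    have h2 : v - v0 ≠ 0 := ne_of_lt hdv
    have h1' : w ≠ v0 := sub_ne_zero.1 h1
    have h2' : v ≠ v0 := sub_ne_zero.1 h2
    rw [eq_div_iff (ne_of_gt hden)]
    unfold fr
    field_simp [h1, h2, h1', h2']
    ring
  have hnum : Δd * ((w - v) * (F1 * (w - v0) * (v - v0)
      - (F1 * v0 - Fp1 * v0 + (F0 - Fp0)) * v0)) ≤ 0 :=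
    mul_nonpos_of_nonpos_of_nonneg hΔd.le key
  have : fr F1 Fp1 (F0 - Fp0) v0 Δd w - fr F1 Fp1 (F0 - Fp0) v0 Δd v ≤ 0 := by
    rw [hfr]
    exact div_nonpos_of_nonpos_of_nonneg hnum hden.le
  linarith
end

section
/- Let G_c = (N_c, E_c, W_c) be a finite coordination graph and let S ⊆ N_c and n ∈ N_c with n ∉ S. Then f_ce(S ∪ {n}) − f_ce(S) = Σ_{i ∈ N_i(n) \ (S ∪ {n})} ( max_{j ∈ N_o(i) ∩ (S ∪ {n})} W_c(i,j) − max_{j ∈ N_o(i) ∩ S} W_c(i,j) ) − max_{j ∈ N_o(n) ∩ S} W_c(n,j), where every maximum over an empty set is 0. In particular, the change of the global objective from adding n to the set of coordination leaders depends only on the edges and weights in the one- and two-hop neighborhood of n. -/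
open Classical in
/-- `maxOut E W i T` is `max_{j ∈ N_o(i) ∩ T} W(i,j)`, with the maximum over an
empty set defined to be `0`. -/
noncomputable def maxOut {V : Type*} (E : V → V → Prop) (W : V → V → ℝ)
    (i : V) (T : Finset V) : ℝ :=
  (T.filter (fun j => E i j)).fold max 0 (W i)

open Classical in
/-- The global objective `f_ce(S) = Σ_{i ∈ N_c \ S} max_{j ∈ N_o(i) ∩ S} W(i,j)`. -/
noncomputable def fce {V : Type*} [Fintype V] (E : V → V → Prop)
    (W : V → V → ℝ) (S : Finset V) : ℝ :=
  ∑ i ∈ Finset.univ \ S, maxOut E W i S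

open Classical in
/-- In a finite coordination graph (no self-loops, positive edge
weights), for `S ⊆ N_c` and `n ∉ S`,
`f_ce(S ∪ {n}) − f_ce(S)
  = Σ_{i ∈ N_i(n) \ (S ∪ {n})} (max_{j ∈ N_o(i) ∩ (S ∪ {n})} W(i,j)
      − max_{j ∈ N_o(i) ∩ S} W(i,j)) − max_{j ∈ N_o(n) ∩ S} W(n,j)`,
where maxima over empty sets are `0`; in particular the change of the global
objective from adding `n` to the leaders is determined by the one- and two-hop
neighborhood of `n`. -/
theorem total_gain_add_leader {V : Type*} [Fintype V]
    (E : V → V → Prop) (W : V → V → ℝ)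
    (hirr : ∀ v, ¬ E v v) (hW : ∀ i j, E i j → 0 < W i j)
    (S : Finset V) (n : V) (hn : n ∉ S) :
    fce E W (insert n S) - fce E W S =
      (∑ i ∈ (Finset.univ.filter (fun i => E i n)) \ insert n S,
          (maxOut E W i (insert n S) - maxOut E W i S)) -
        maxOut E W n S := by
  classical
  have key : ∀ i : V, ¬ E i n → maxOut E W i (insert n S) = maxOut E W i S := by
    intro i h
    unfold maxOut
    congr 1
    rw [Finset.filter_insert, if_neg h]
  have hmem : n ∈ Finset.univ \ S := by simp [hn]
  have hsplit : fce E W S =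
      maxOut E W n S + ∑ i ∈ (Finset.univ \ S).erase n, maxOut E W i S := by
    unfold fce
    exact (Finset.add_sum_erase _ _ hmem).symm
  have herase : (Finset.univ \ S).erase n = Finset.univ \ insert n S := by
    ext x
    simp [Finset.mem_erase, and_comm, eq_comm]
  have hsub : (Finset.univ.filter (fun i => E i n)) \ insert n S ⊆
      Finset.univ \ insert n S := by
    intro x hx
    simp only [Finset.mem_sdiff, Finset.mem_filter] at hx ⊢
    exact ⟨Finset.mem_univ x, hx.2⟩
  have hsum : ∑ i ∈ Finset.univ \ insert n S,
      (maxOut E W i (insert n S) - maxOut E W i S) =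
      ∑ i ∈ (Finset.univ.filter (fun i => E i n)) \ insert n S,
        (maxOut E W i (insert n S) - maxOut E W i S) := by
    refine (Finset.sum_subset hsub ?_).symm
    intro x hx hnx
    have hEn : ¬ E x n := by
      simp only [Finset.mem_sdiff, Finset.mem_filter, Finset.mem_univ,
        true_and] at hx hnx
      tauto
    rw [key x hEn, sub_self]
  rw [hsplit, herase]
  unfold fce
  rw [← hsum, Finset.sum_sub_distrib]
  ring
end

section
/- Let G_c = (N_c, E_c, W_c) be a finite coordination graph and let S ⊆ N_c and n ∈ S. Then f_ce(S \ {n}) − f_ce(S) = Σ_{i ∈ N_i(n) \ S} ( max_{j ∈ N_o(i) ∩ (S \ {n})} W_c(i,j) − max_{j ∈ N_o(i) ∩ S} W_c(i,j) ) + max_{j ∈ N_o(n) ∩ (S \ {n})} W_c(n,j), where every maximum over an empty set is 0. -/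
open Classical in
/-- In a finite coordination graph (no self-loops, positive edge
weights), for `S ⊆ N_c` and `n ∈ S`,
`f_ce(S \ {n}) − f_ce(S)
  = Σ_{i ∈ N_i(n) \ S} (max_{j ∈ N_o(i) ∩ (S \ {n})} W(i,j)
      − max_{j ∈ N_o(i) ∩ S} W(i,j)) + max_{j ∈ N_o(n) ∩ (S \ {n})} W(n,j)`,
where maxima over empty sets are `0`. -/
theorem total_gain_remove_leader {V : Type*} [Fintype V]
    (E : V → V → Prop) (W : V → V → ℝ)
    (hirr : ∀ v, ¬ E v v) (hW : ∀ i j, E i j → 0 < W i j)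
    (S : Finset V) (n : V) (hn : n ∈ S) :
    fce E W (S.erase n) - fce E W S =
      (∑ i ∈ (Finset.univ.filter (fun i => E i n)) \ S,
          (maxOut E W i (S.erase n) - maxOut E W i S)) +
        maxOut E W n (S.erase n) := by
  classical
  have key : ∀ i, ¬ E i n → maxOut E W i (S.erase n) = maxOut E W i S := by
    intro i h
    unfold maxOut
    congr 1
    ext j
    simp only [Finset.mem_filter, Finset.mem_erase]
    constructor
    · rintro ⟨⟨_, hj⟩, he⟩; exact ⟨hj, he⟩
    · rintro ⟨hj, he⟩
      refine ⟨⟨?_, hj⟩, he⟩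
      rintro rfl; exact h he
  have hsplit : Finset.univ \ (S.erase n) = insert n (Finset.univ \ S) := by
    ext x
    simp only [Finset.mem_sdiff, Finset.mem_univ, Finset.mem_erase,
      Finset.mem_insert, true_and]
    by_cases hx : x = n <;> simp [hx]
  have hnotmem : n ∉ Finset.univ \ S := by simp [hn]
  have h1 : fce E W (S.erase n) =
      maxOut E W n (S.erase n) + ∑ i ∈ Finset.univ \ S, maxOut E W i (S.erase n) := by
    rw [fce, hsplit, Finset.sum_insert hnotmem]
  have h2 : (∑ i ∈ Finset.univ \ S, maxOut E W i (S.erase n))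
      - ∑ i ∈ Finset.univ \ S, maxOut E W i S
      = ∑ i ∈ Finset.univ \ S, (maxOut E W i (S.erase n) - maxOut E W i S) := by
    rw [Finset.sum_sub_distrib]
  have hsub : (Finset.univ.filter (fun i => E i n)) \ S ⊆ Finset.univ \ S := by
    intro x hx
    simp only [Finset.mem_sdiff, Finset.mem_filter] at hx ⊢
    exact ⟨Finset.mem_univ x, hx.2⟩
  have h3 : ∑ i ∈ Finset.univ \ S, (maxOut E W i (S.erase n) - maxOut E W i S)
      = ∑ i ∈ (Finset.univ.filter (fun i => E i n)) \ S,
          (maxOut E W i (S.erase n) - maxOut E W i S) := by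
    refine (Finset.sum_subset hsub ?_).symm
    intro x hx hx'
    simp only [Finset.mem_sdiff, Finset.mem_filter, Finset.mem_univ, true_and] at hx hx'
    have : ¬ E x n := fun h => hx' ⟨h, hx⟩
    rw [key x this, sub_self]
  rw [h1, fce]
  linarith [h2, h3]
end

section
/- (Non-convergence with pairwise gain.) There exist a finite coordination graph G_c = (N_c, E_c, W_c), parameters ρ_l ∈ (0,1) and ρ_f = 1 − ρ_l, an initial set S₀ ⊆ N_c, and an infinite sequence of nodes n₀, n₁, n₂, … such that for every k the pairwise gain Δu(n_k, S_k) is strictly positive and S_{k+1} = S_k ∪ {n_k} if n_k ∉ S_k and S_{k+1} = S_k \ {n_k} if n_k ∈ S_k; in particular, the sequence (S_k) revisits the same set infinitely often, so the leader-selection algorithm with pairwise gain need not converge to an equilibrium. -/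
open Classical in
/-- The followers of a leader `j ∈ S`: nodes `i ∉ S` with `(i,j) ∈ E_c` whose
weight to `j` strictly exceeds the weight to every other leader they can reach. -/
noncomputable def followersOf {V : Type*} [Fintype V] (E : V → V → Prop)
    (W : V → V → ℝ) (j : V) (S : Finset V) : Finset V :=
  (Finset.univ \ S).filter
    (fun i => E i j ∧ j ∈ S ∧ ∀ k ∈ S, E i k → k ≠ j → W i k < W i j)

open Classical in
/-- Follower utility `u_f(i,S) = ρ_f · max_{j ∈ N_o(i) ∩ S} W(i,j)`. -/
noncomputable def uf {V : Type*} (E : V → V → Prop) (W : V → V → ℝ)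
    (ρf : ℝ) (i : V) (S : Finset V) : ℝ :=
  ρf * maxOut E W i S

open Classical in
/-- Leader utility `u_l(j,S) = ρ_l · Σ_{i follower of j} W(i,j)`. -/
noncomputable def ul {V : Type*} [Fintype V] (E : V → V → Prop)
    (W : V → V → ℝ) (ρl : ℝ) (j : V) (S : Finset V) : ℝ :=
  ρl * ∑ i ∈ followersOf E W j S, W i j

open Classical in
/-- Pairwise gain `Δu(n,S)` of flipping the leader status of `n`, where the
platooning benefit is split with ratios `ρ_l` (leader) and `ρ_f = 1 − ρ_l`
(follower). -/
noncomputable def pairwiseGain {V : Type*} [Fintype V] (E : V → V → Prop)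
    (W : V → V → ℝ) (ρl : ℝ) (n : V) (S : Finset V) : ℝ :=
  if n ∈ S then uf E W (1 - ρl) n (S.erase n) - ul E W ρl n S
  else ul E W ρl n (insert n S) - uf E W (1 - ρl) n S

open Classical in
/-- The body of STATEMENT 17: the graph `(E, W)` on `V` is a coordination graph
(no self-loops, positive edge weights), `ρ_l ∈ (0,1)`, and there is an infinite
run of the leader-selection algorithm with pairwise gain in which every flipped
node has strictly positive gain; in particular some leader set is revisited
infinitely often. -/
def PairwiseNonConvergenceWitness (V : Type) [Fintype V]
    (E : V → V → Prop) (W : V → V → ℝ) (ρl : ℝ) : Prop :=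
  (∀ v, ¬ E v v) ∧ (∀ i j, E i j → 0 < W i j) ∧ 0 < ρl ∧ ρl < 1 ∧
  ∃ (Ss : ℕ → Finset V) (ns : ℕ → V),
    (∀ k, 0 < pairwiseGain E W ρl (ns k) (Ss k) ∧
      Ss (k + 1) =
        if ns k ∈ Ss k then (Ss k).erase (ns k) else insert (ns k) (Ss k)) ∧
    ∃ T : Finset V, ∀ m : ℕ, ∃ k ≥ m, Ss k = T


set_option linter.unnecessarySeqFocus false


lemma insert_classical {α} [DecidableEq α] (a : α) (s : Finset α) :
    @insert α (Finset α)
      (@Finset.instInsert α (fun a b => Classical.propDecidable (a = b))) a s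
      = insert a s := by
  ext x; simp

lemma erase_classical {α} [DecidableEq α] (s : Finset α) (a : α) :
    @Finset.erase α (fun a b => Classical.propDecidable (a = b)) s a = s.erase a := by
  ext x; simp

/-- Weight matrix (natural-number values) of the counterexample graph. -/
def Wn : Fin 4 → Fin 4 → ℕ := ![![0,0,2,4],![0,0,0,4],![4,0,0,2],![3,0,5,0]]

/-- Real-valued weights. -/
noncomputable def Wr : Fin 4 → Fin 4 → ℝ := fun i j => (Wn i j : ℝ)

/-- Edge relation: positive weight. -/
def Ec : Fin 4 → Fin 4 → Prop := fun i j => Wn i j ≠ 0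

instance : DecidableRel Ec := fun i j => by unfold Ec; infer_instance

/-- The cyclic sequence of leader sets. -/
def Ssv : ℕ → Finset (Fin 4) := fun r => match r with
  | 0 => {0,1} | 1 => {0,1,2} | 2 => {1,2} | 3 => {1,2,3} | 4 => {1,3} | _ => {0,1,3}

/-- The cyclic sequence of flipped nodes. -/
def nsv : ℕ → Fin 4 := fun r => match r with
  | 0 => 2 | 1 => 0 | 2 => 3 | 3 => 2 | 4 => 0 | _ => 3

lemma fol0 : followersOf Ec Wr 2 (insert 2 ({0,1} : Finset (Fin 4))) = {3} := by
  ext x; fin_cases x <;> simp [followersOf, Ec, Wr, Nat.cast_lt] <;> decide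

lemma fol1 : followersOf Ec Wr 0 ({0,1,2} : Finset (Fin 4)) = ∅ := by
  ext x; fin_cases x <;> simp [followersOf, Ec, Wr, Nat.cast_lt] <;> decide

lemma fol2 : followersOf Ec Wr 3 (insert 3 ({1,2} : Finset (Fin 4))) = {0} := by
  ext x; fin_cases x <;> simp [followersOf, Ec, Wr, Nat.cast_lt] <;> decide

lemma fol3 : followersOf Ec Wr 2 ({1,2,3} : Finset (Fin 4)) = ∅ := by
  ext x; fin_cases x <;> simp [followersOf, Ec, Wr, Nat.cast_lt] <;> decide

lemma fol4 : followersOf Ec Wr 0 (insert 0 ({1,3} : Finset (Fin 4))) = {2} := by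
  ext x; fin_cases x <;> simp [followersOf, Ec, Wr, Nat.cast_lt] <;> decide

lemma fol5 : followersOf Ec Wr 3 ({0,1,3} : Finset (Fin 4)) = ∅ := by
  ext x; fin_cases x <;> simp [followersOf, Ec, Wr, Nat.cast_lt] <;> decide

lemma mo0 : maxOut Ec Wr 2 ({0,1} : Finset (Fin 4)) = 4 := by
  unfold maxOut; rw [Finset.filter_congr_decidable]
  rw [show (({0,1}:Finset (Fin 4)).filter (fun j => Ec 2 j)) = {0} by decide]
  simp [Wr, show Wn 2 0 = 4 by decide]

lemma mo1 : maxOut Ec Wr 0 (({0,1,2} : Finset (Fin 4)).erase 0) = 2 := by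
  unfold maxOut; rw [Finset.filter_congr_decidable]
  rw [show ((({0,1,2}:Finset (Fin 4)).erase 0).filter (fun j => Ec 0 j)) = {2} by decide]
  simp [Wr, show Wn 0 2 = 2 by decide]

lemma mo2 : maxOut Ec Wr 3 ({1,2} : Finset (Fin 4)) = 5 := by
  unfold maxOut; rw [Finset.filter_congr_decidable]
  rw [show (({1,2}:Finset (Fin 4)).filter (fun j => Ec 3 j)) = {2} by decide]
  simp [Wr, show Wn 3 2 = 5 by decide]

lemma mo3 : maxOut Ec Wr 2 (({1,2,3} : Finset (Fin 4)).erase 2) = 2 := by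
  unfold maxOut; rw [Finset.filter_congr_decidable]
  rw [show ((({1,2,3}:Finset (Fin 4)).erase 2).filter (fun j => Ec 2 j)) = {3} by decide]
  simp [Wr, show Wn 2 3 = 2 by decide]

lemma mo4 : maxOut Ec Wr 0 ({1,3} : Finset (Fin 4)) = 4 := by
  unfold maxOut; rw [Finset.filter_congr_decidable]
  rw [show (({1,3}:Finset (Fin 4)).filter (fun j => Ec 0 j)) = {3} by decide]
  simp [Wr, show Wn 0 3 = 4 by decide]

lemma mo5 : maxOut Ec Wr 3 (({0,1,3} : Finset (Fin 4)).erase 3) = 3 := by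
  unfold maxOut; rw [Finset.filter_congr_decidable]
  rw [show ((({0,1,3}:Finset (Fin 4)).erase 3).filter (fun j => Ec 3 j)) = {0} by decide]
  simp [Wr, show Wn 3 0 = 3 by decide]

lemma gain0 : 0 < pairwiseGain Ec Wr (2/3) (nsv 0) (Ssv 0) := by
  show 0 < pairwiseGain Ec Wr (2/3) 2 {0,1}
  unfold pairwiseGain
  rw [if_neg (by decide)]
  unfold ul uf
  simp only [insert_classical, erase_classical]
  rw [fol0, mo0, Finset.sum_singleton]
  simp [Wr, show Wn 3 2 = 5 by decide]; norm_num

lemma gain1 : 0 < pairwiseGain Ec Wr (2/3) (nsv 1) (Ssv 1) := by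
  show 0 < pairwiseGain Ec Wr (2/3) 0 {0,1,2}
  unfold pairwiseGain
  rw [if_pos (by decide)]
  unfold ul uf
  simp only [insert_classical, erase_classical]
  rw [fol1, mo1, Finset.sum_empty]
  norm_num

lemma gain2 : 0 < pairwiseGain Ec Wr (2/3) (nsv 2) (Ssv 2) := by
  show 0 < pairwiseGain Ec Wr (2/3) 3 {1,2}
  unfold pairwiseGain
  rw [if_neg (by decide)]
  unfold ul uf
  simp only [insert_classical, erase_classical]
  rw [fol2, mo2, Finset.sum_singleton]
  simp [Wr, show Wn 0 3 = 4 by decide]; norm_num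

lemma gain3 : 0 < pairwiseGain Ec Wr (2/3) (nsv 3) (Ssv 3) := by
  show 0 < pairwiseGain Ec Wr (2/3) 2 {1,2,3}
  unfold pairwiseGain
  rw [if_pos (by decide)]
  unfold ul uf
  simp only [insert_classical, erase_classical]
  rw [fol3, mo3, Finset.sum_empty]
  norm_num

lemma gain4 : 0 < pairwiseGain Ec Wr (2/3) (nsv 4) (Ssv 4) := by
  show 0 < pairwiseGain Ec Wr (2/3) 0 {1,3}
  unfold pairwiseGain
  rw [if_neg (by decide)]
  unfold ul uf
  simp only [insert_classical, erase_classical]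
  rw [fol4, mo4, Finset.sum_singleton]
  simp [Wr, show Wn 2 0 = 4 by decide]; norm_num

lemma gain5 : 0 < pairwiseGain Ec Wr (2/3) (nsv 5) (Ssv 5) := by
  show 0 < pairwiseGain Ec Wr (2/3) 3 {0,1,3}
  unfold pairwiseGain
  rw [if_pos (by decide)]
  unfold ul uf
  simp only [insert_classical, erase_classical]
  rw [fol5, mo5, Finset.sum_empty]
  norm_num

/-- Non-convergence with pairwise gain: there exist a finite
coordination graph, split parameters `ρ_l ∈ (0,1)`, `ρ_f = 1 − ρ_l`, an initial
leader set and an infinite sequence of flips, each with strictly positive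
pairwise gain, following the algorithm's update rule; the sequence of leader
sets revisits the same set infinitely often, so the algorithm need not
converge to an equilibrium. -/
theorem pairwise_gain_algorithm_need_not_converge :
    ∃ (V : Type) (instV : Fintype V) (E : V → V → Prop) (W : V → V → ℝ)
      (ρl : ℝ), @PairwiseNonConvergenceWitness V instV E W ρl := by
  refine ⟨Fin 4, inferInstance, Ec, Wr, 2/3, ?_, ?_, by norm_num, by norm_num, ?_⟩
  · decide
  · intro i j h
    have h0 : 0 < Wn i j := Nat.pos_of_ne_zero h
    simp only [Wr]
    exact_mod_cast h0
  · refine ⟨fun k => Ssv (k % 6), fun k => nsv (k % 6), ?_, {0,1}, ?_⟩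
    · intro k
      have h6 : k % 6 = 0 ∨ k % 6 = 1 ∨ k % 6 = 2 ∨ k % 6 = 3 ∨ k % 6 = 4 ∨ k % 6 = 5 := by
        omega
      rcases h6 with h | h | h | h | h | h
      · have h' : (k + 1) % 6 = 1 := by omega
        simp only [h, h']; exact ⟨gain0, by simp only [Ssv, nsv]; rw [if_neg (by decide), insert_classical]; try decide⟩
      · have h' : (k + 1) % 6 = 2 := by omega
        simp only [h, h']; exact ⟨gain1, by simp only [Ssv, nsv]; rw [if_pos (by decide), erase_classical]; try decide⟩
      · have h' : (k + 1) % 6 = 3 := by omega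
        simp only [h, h']; exact ⟨gain2, by simp only [Ssv, nsv]; rw [if_neg (by decide), insert_classical]; try decide⟩
      · have h' : (k + 1) % 6 = 4 := by omega
        simp only [h, h']; exact ⟨gain3, by simp only [Ssv, nsv]; rw [if_pos (by decide), erase_classical]; try decide⟩
      · have h' : (k + 1) % 6 = 5 := by omega
        simp only [h, h']; exact ⟨gain4, by simp only [Ssv, nsv]; rw [if_neg (by decide), insert_classical]; try decide⟩
      · have h' : (k + 1) % 6 = 0 := by omega
        simp only [h, h']; exact ⟨gain5, by simp only [Ssv, nsv]; rw [if_pos (by decide), erase_classical]; try decide⟩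
    · intro m
      refine ⟨6 * (m + 1), by omega, ?_⟩
      have h : (6 * (m + 1)) % 6 = 0 := by omega
      simp only [h]; rfl
end
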